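/- arXiv:1403.6724 — 5 statements merged into one kernel-verified Lean document; each statement's English description precedes it below -/
import Mathlib

section
/- For every ξ ∈ H, the map T → ℓ²(I), t ↦ ψ_t(ξ) = (ξ_i(t))_{i∈I}, is continuous (with respect to the norm topology of ℓ²(I)). -/
open scoped ComplexOrder

noncomputable section

abbrev ell2 (I : Type*) : Type _ := lp (fun _ : I => ℂ) 2

/-- `n`-th singular value of an operator: distance to operators of rank `< n`. -/
def sval {F : Type*} [NormedAddCommGroup F] [InnerProductSpace ℂ F] (n : ℕ)
    (a : F →L[ℂ] F) : ℝ :=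
  sInf {r : ℝ | ∃ b : F →L[ℂ] F,
    Module.rank ℂ (LinearMap.range (b : F →ₗ[ℂ] F)) < n ∧ r = ‖a - b‖}

/-- rank one operator `z ↦ ⟨z, y⟩ • x` (inner product linear in the first variable). -/
def rankOne {F : Type*} [NormedAddCommGroup F] [InnerProductSpace ℂ F] (x y : F) :
    F →L[ℂ] F :=
  (ContinuousLinearMap.toSpanSingleton ℂ x).comp ((innerSL ℂ) y)

variable {T I : Type*} [TopologicalSpace T] [CompactSpace T] [T2Space T]

/-- membership in the Hilbert right `C(T,ℂ)`-module `H = ⊕_i p_i E`. -/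
def MemH (p : I → C(T, ℂ)) (ξ : I → C(T, ℂ)) : Prop :=
  (∀ i, p i * ξ i = ξ i) ∧ Summable fun i => star (ξ i) * ξ i

/-- the `E`-valued inner product of `H`, `⟨ξ, η⟩ = ∑ i, η i * * ξ i`. -/
def hinner (ξ η : I → C(T, ℂ)) : C(T, ℂ) := ∑' i, star (η i) * ξ i

/-- the norm of `H`. -/
def hnorm (ξ : I → C(T, ℂ)) : ℝ := Real.sqrt ‖hinner ξ ξ‖

/-- adjointable operators on `H`, i.e. the elements of `L_E(H)`. -/
structure Adjointable (p : I → C(T, ℂ)) where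
  toFun : (I → C(T, ℂ)) → (I → C(T, ℂ))
  adj : (I → C(T, ℂ)) → (I → C(T, ℂ))
  mem' : ∀ ξ, MemH p ξ → MemH p (toFun ξ)
  adj_mem' : ∀ ξ, MemH p ξ → MemH p (adj ξ)
  map_add' : ∀ ξ η, MemH p ξ → MemH p η → toFun (ξ + η) = toFun ξ + toFun η
  map_smul' : ∀ (x : C(T, ℂ)) ξ, MemH p ξ →
    toFun (fun i => ξ i * x) = fun i => toFun ξ i * x
  bound' : ∃ C : ℝ, ∀ ξ, MemH p ξ → hnorm (toFun ξ) ≤ C * hnorm ξ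
  inner_adj' : ∀ ξ η, MemH p ξ → MemH p η → hinner (toFun ξ) η = hinner ξ (adj η)

/-- `a : ℓ²(I) → ℓ²(I)` represents `φ_t u := ψ_t ∘ u ∘ ψ`. -/
def Represents (p : I → C(T, ℂ)) (t : T)
    (u : (I → C(T, ℂ)) → (I → C(T, ℂ))) (a : ell2 I →L[ℂ] ell2 I) : Prop :=
  ∀ ζ : ell2 I, ∀ i : I, (a ζ : ∀ _ : I, ℂ) i = u (fun j => ((ζ : ∀ _ : I, ℂ) j) • p j) i t

/-- membership in `K(H)`: uniform approximation, on the unit ball of `H`, by finite sums of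
rank one module operators. -/
def CompactH (p : I → C(T, ℂ)) (u : (I → C(T, ℂ)) → (I → C(T, ℂ))) : Prop :=
  ∀ ε : ℝ, 0 < ε → ∃ (m : ℕ) (ξs ηs : Fin m → (I → C(T, ℂ))),
    (∀ k, MemH p (ξs k) ∧ MemH p (ηs k)) ∧
    ∀ ζ, MemH p ζ → hnorm ζ ≤ 1 →
      hnorm (fun i => u ζ i - ∑ k, ξs k i * hinner ζ (ηs k)) ≤ ε

/-- `u ∈ L^p(E,H)`, expressed through a family `A` of representatives of the `φ_t u`:
the family `(θ_n(u)^p)ₙ` is summable in `E`. -/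
def InLp {I : Type*} (pp : ℝ) (A : T → (ell2 I →L[ℂ] ell2 I)) : Prop :=
  ∃ Θ : ℕ → C(T, ℝ), (∀ n t, Θ n t = sval (n + 1) (A t) ^ pp) ∧ Summable Θ

/-- the norm `‖u‖_p = ‖∑ₙ θ_n(u)^p‖^(1/p)`. -/
def pnorm {I : Type*} (pp : ℝ) (A : T → (ell2 I →L[ℂ] ell2 I)) : ℝ :=
  (⨆ t : T, ∑' n : ℕ, sval (n + 1) (A t) ^ pp) ^ (1 / pp)

/-- the operator norm of an element of `L_E(H)`. -/
def opNormH (p : I → C(T, ℂ)) (u : Adjointable p) : ℝ :=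
  ⨆ ξ : {ξ : I → C(T, ℂ) // MemH p ξ ∧ hnorm ξ ≤ 1}, hnorm (u.toFun ξ)

end

/-! The maps `t ↦ ξ i t • e_i` are continuous from `T` to `ℓ²(I)`, and for every finite
`s ⊆ I` the sup norm of their sum over `s` is at most `‖∑_{i ∈ s} ξ_i* ξ_i‖^{1/2}`. So
summability of `(ξ_i* ξ_i)` in `C(T)` makes them summable in the Banach space `C(T, ℓ²(I))`
by the Cauchy criterion, and the sum, evaluated at `t`, is `ψ_t ξ`. -/

namespace lp

theorem norm_sum_single_two_sq {I : Type*} [DecidableEq I] {E : I → Type*}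
    [∀ i, NormedAddCommGroup (E i)] (c : ∀ i, E i) (s : Finset I) :
    ‖∑ i ∈ s, lp.single 2 i (c i)‖ ^ 2 = ∑ i ∈ s, ‖c i‖ ^ 2 := by
  simpa using lp.norm_sum_single (p := 2) (by norm_num) c s

end lp

namespace ContinuousMap

variable {T I : Type*} [TopologicalSpace T]

noncomputable def singleEll2 [DecidableEq I] (ξ : I → C(T, ℂ)) (i : I) : C(T, ell2 I) :=
  ⟨fun t => lp.single 2 i (ξ i t), (lp.isometry_single i).continuous.comp (ξ i).continuous⟩

theorem sum_star_mul_self_apply (ξ : I → C(T, ℂ)) (s : Finset I) (t : T) :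
    (∑ i ∈ s, star (ξ i) * ξ i) t = ((∑ i ∈ s, ‖ξ i t‖ ^ 2 : ℝ) : ℂ) := by
  simp [sum_apply, RCLike.conj_mul]

variable [CompactSpace T]

theorem norm_sum_singleEll2_le [DecidableEq I] (ξ : I → C(T, ℂ)) (s : Finset I) :
    ‖∑ i ∈ s, singleEll2 ξ i‖ ≤ √‖∑ i ∈ s, star (ξ i) * ξ i‖ := by
  refine (norm_le _ (Real.sqrt_nonneg _)).2 fun t => Real.le_sqrt_of_sq_le ?_
  calc ‖(∑ i ∈ s, singleEll2 ξ i) t‖ ^ 2 = ∑ i ∈ s, ‖ξ i t‖ ^ 2 := by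
        simpa [sum_apply, singleEll2] using lp.norm_sum_single_two_sq (fun i => ξ i t) s
    _ = ‖(∑ i ∈ s, star (ξ i) * ξ i) t‖ := by
        rw [sum_star_mul_self_apply, Complex.norm_real, Real.norm_of_nonneg (by positivity)]
    _ ≤ ‖∑ i ∈ s, star (ξ i) * ξ i‖ := norm_coe_le_norm _ t

theorem summable_singleEll2 [DecidableEq I] {ξ : I → C(T, ℂ)}
    (hξ : Summable fun i => star (ξ i) * ξ i) :
    Summable (singleEll2 ξ) := by
  refine summable_iff_vanishing_norm.2 fun ε hε => ?_
  obtain ⟨s, hs⟩ := summable_iff_vanishing_norm.1 hξ (ε ^ 2) (by positivity)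
  refine ⟨s, fun u hu => (norm_sum_singleEll2_le ξ u).trans_lt ?_⟩
  exact (Real.sqrt_lt' hε).2 (hs u hu)

end ContinuousMap

theorem stmt0_general {T I : Type*} [TopologicalSpace T] [CompactSpace T]
    (p : I → C(T, ℂ))
    (ξ : I → C(T, ℂ)) (hξ : MemH p ξ)
    (f : T → ell2 I) (hf : ∀ (t : T) (i : I), (f t : ∀ _ : I, ℂ) i = ξ i t) :
    Continuous f := by
  classical
  obtain ⟨g, hg⟩ := ContinuousMap.summable_singleEll2 hξ.2
  suffices f = g by rw [this]; exact g.continuous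
  funext t
  have hgt : HasSum (fun i => lp.single 2 i (ξ i t)) (g t) :=
    hg.map (ContinuousMap.evalCLM ℂ t) (ContinuousMap.evalCLM ℂ t).continuous
  have hft : HasSum (fun i => lp.single 2 i (ξ i t)) (f t) := by
    simpa [hf t] using lp.hasSum_single (p := 2) (by norm_num) (f t)
  exact hft.unique hgt

/-- For every `ξ ∈ H`, the map `T → ℓ²(I)`, `t ↦ ψ_t ξ = (ξ i t)_{i ∈ I}`,
is continuous (for the norm topology of `ℓ²(I)`). -/
theorem stmt0 {T I : Type*} [TopologicalSpace T] [CompactSpace T] [T2Space T]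
    (p : I → C(T, ℂ)) (hp : ∀ i t, p i t = 0 ∨ p i t = 1)
    (ξ : I → C(T, ℂ)) (hξ : MemH p ξ)
    (f : T → ell2 I) (hf : ∀ (t : T) (i : I), (f t : ∀ _ : I, ℂ) i = ξ i t) :
    Continuous f :=
  stmt0_general p ξ hξ f hf
end

section
/- For every t ∈ T and every adjointable operator u ∈ L_E(H), one has ψ_t ∘ u ∘ ψ ∘ ψ_t = ψ_t ∘ u as maps H → ℓ²(I). -/
open scoped ComplexOrder

section Aux

variable {T I : Type*} [TopologicalSpace T] [CompactSpace T] [T2Space T]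

lemma summable_aux' {g h : I → C(T, ℂ)} (hh : Summable h)
    (hle : ∀ (F : Finset I) (t : T), ∑ j ∈ F, ‖g j t‖ ≤ ‖∑ j ∈ F, h j‖) :
    Summable g := by
  rw [summable_iff_vanishing]
  intro e he
  obtain ⟨ε, εpos, hball⟩ := Metric.mem_nhds_iff.mp he
  obtain ⟨s, hs⟩ := summable_iff_vanishing.mp hh (Metric.ball 0 ε)
    (Metric.ball_mem_nhds 0 εpos)
  refine ⟨s, fun F hF => hball ?_⟩
  have h1 : ‖∑ j ∈ F, h j‖ < ε := by
    simpa [dist_zero_right] using hs F hF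
  rw [Metric.mem_ball, dist_zero_right]
  refine lt_of_le_of_lt ?_ h1
  refine (ContinuousMap.norm_le _ (norm_nonneg _)).mpr fun t => ?_
  calc ‖(∑ j ∈ F, g j) t‖ = ‖∑ j ∈ F, g j t‖ := by simp
    _ ≤ ∑ j ∈ F, ‖g j t‖ := norm_sum_le _ _
    _ ≤ _ := hle F t

lemma real_le_norm_apply' {h : C(T, ℂ)} {t : T} {r : ℝ} (hr : h t = (r : ℂ)) :
    r ≤ ‖h‖ := by
  calc r ≤ |r| := le_abs_self r
    _ = ‖(r : ℂ)‖ := by simp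
    _ = ‖h t‖ := by rw [hr]
    _ ≤ ‖h‖ := h.norm_coe_le_norm t

lemma summable_inner' {η ζ : I → C(T, ℂ)}
    (hη : Summable fun j => star (η j) * η j)
    (hζ : Summable fun j => star (ζ j) * ζ j) :
    Summable fun j => star (ζ j) * η j := by
  refine summable_aux' (hη.add hζ) fun F t => ?_
  have key : ((∑ j ∈ F, (star (η j) * η j + star (ζ j) * ζ j)) t : ℂ)
      = ((∑ j ∈ F, (‖η j t‖ ^ 2 + ‖ζ j t‖ ^ 2) : ℝ) : ℂ) := by
    push_cast
    simp only [ContinuousMap.coe_sum, Finset.sum_apply, ContinuousMap.add_apply,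
      ContinuousMap.mul_apply, ContinuousMap.star_apply]
    refine Finset.sum_congr rfl fun j _ => ?_
    rw [RCLike.star_def, RCLike.conj_mul, RCLike.conj_mul]
    norm_cast
  refine le_trans ?_ (real_le_norm_apply' key)
  refine Finset.sum_le_sum fun j _ => ?_
  simp only [ContinuousMap.mul_apply, ContinuousMap.star_apply, norm_mul, norm_star]
  nlinarith [norm_nonneg (ζ j t), norm_nonneg (η j t), sq_nonneg (‖ζ j t‖ - ‖η j t‖)]

lemma eval_tsum' {f : I → C(T, ℂ)} (hf : Summable f) (t : T) :
    (∑' i, f i) t = ∑' i, f i t :=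
  (ContinuousMap.evalCLM ℂ t).map_tsum hf

lemma adjointable_eval_zero (p : I → C(T, ℂ)) (u : Adjointable p) (t : T)
    (η : I → C(T, ℂ)) (hη : MemH p η) (hz : ∀ j, η j t = 0) (i : I) :
    u.toFun η i t = 0 := by
  set w := u.toFun η with hwdef
  have hw : MemH p w := u.mem' η hη
  have hζ : MemH p (u.adj w) := u.adj_mem' w hw
  have he : hinner w w = hinner η (u.adj w) := u.inner_adj' η w hη hw
  have h2 : hinner η (u.adj w) t = 0 := by
    have hs := summable_inner' hη.2 hζ.2
    rw [hinner, eval_tsum' hs]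
    simp [hz]
  have h3 : hinner w w t = 0 := by rw [he]; exact h2
  have hs2 : Summable (fun j => star (w j) * w j) := hw.2
  have h4 : (∑' j, ((‖w j t‖ ^ 2 : ℝ) : ℂ)) = 0 := by
    rw [← h3, hinner, eval_tsum' hs2]
    refine tsum_congr fun j => ?_
    simp only [ContinuousMap.mul_apply, ContinuousMap.star_apply]
    rw [RCLike.star_def, RCLike.conj_mul]
    norm_cast
  have hs3 : Summable (fun j => ((‖w j t‖ ^ 2 : ℝ) : ℂ)) := by
    have := hs2.map (ContinuousMap.evalCLM ℂ t) (ContinuousMap.evalCLM ℂ t).continuous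
    refine this.congr fun j => ?_
    simp only [Function.comp]
    show (star (w j) * w j) t = _
    simp only [ContinuousMap.mul_apply, ContinuousMap.star_apply]
    rw [RCLike.star_def, RCLike.conj_mul]
    norm_cast
  have hs4 : Summable (fun j => (‖w j t‖ ^ 2 : ℝ)) := Complex.summable_ofReal.mp hs3
  have h5 : (∑' j, (‖w j t‖ ^ 2 : ℝ)) = 0 := by
    have := (Complex.ofReal_tsum (fun j => (‖w j t‖ ^ 2 : ℝ))).trans h4
    exact_mod_cast this
  have h6 : (‖w i t‖ ^ 2 : ℝ) ≤ 0 := h5 ▸ Summable.le_tsum hs4 i (fun j _ => sq_nonneg _)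
  have : ‖w i t‖ = 0 := by nlinarith [norm_nonneg (w i t), sq_nonneg ‖w i t‖]
  simpa using this

end Aux

/-- For every `t ∈ T` and every adjointable operator `u ∈ L_E(H)`,
`ψ_t ∘ u ∘ ψ ∘ ψ_t = ψ_t ∘ u` as maps `H → ℓ²(I)`. -/
theorem stmt1 {T I : Type*} [TopologicalSpace T] [CompactSpace T] [T2Space T]
    (p : I → C(T, ℂ)) (hp : ∀ i t, p i t = 0 ∨ p i t = 1)
    (u : Adjointable p) (t : T)
    (ξ : I → C(T, ℂ)) (hξ : MemH p ξ) (i : I) :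
    u.toFun (fun j => ξ j t • p j) i t = u.toFun ξ i t := by
  classical
  set v : I → C(T, ℂ) := fun j => ξ j t • p j with hvdef
  have hpidem : ∀ j, p j * p j = p j := by
    intro j
    ext t'
    rcases hp j t' with h | h <;> simp [h]
  have hpnorm : ∀ j t', ‖p j t'‖ ≤ 1 := by
    intro j t'
    rcases hp j t' with h | h <;> simp [h]
  have hv : MemH p v := by
    constructor
    · intro j
      ext t'
      simp only [hvdef, ContinuousMap.mul_apply, ContinuousMap.smul_apply, smul_eq_mul]
      rcases hp j t' with h | h <;> simp [h]
    · refine summable_aux' hξ.2 fun F t' => ?_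
      have key : ((∑ j ∈ F, star (ξ j) * ξ j) t : ℂ)
          = ((∑ j ∈ F, ‖ξ j t‖ ^ 2 : ℝ) : ℂ) := by
        push_cast
        simp only [ContinuousMap.coe_sum, Finset.sum_apply, ContinuousMap.mul_apply,
          ContinuousMap.star_apply]
        refine Finset.sum_congr rfl fun j _ => ?_
        rw [RCLike.star_def, RCLike.conj_mul]
        norm_cast
      refine le_trans ?_ (real_le_norm_apply' key)
      refine Finset.sum_le_sum fun j _ => ?_
      simp only [hvdef, ContinuousMap.mul_apply, ContinuousMap.star_apply,
        ContinuousMap.smul_apply, smul_eq_mul, norm_mul, norm_star]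
      have h1 : ‖ξ j t‖ * ‖p j t'‖ ≤ ‖ξ j t‖ * 1 :=
        mul_le_mul_of_nonneg_left (hpnorm j t') (norm_nonneg _)
      have h0 : 0 ≤ ‖ξ j t‖ * ‖p j t'‖ := mul_nonneg (norm_nonneg _) (norm_nonneg _)
      have h2 := mul_self_le_mul_self h0 (by linarith : ‖ξ j t‖ * ‖p j t'‖ ≤ ‖ξ j t‖)
      nlinarith
  set η : I → C(T, ℂ) := fun j => ξ j - v j with hηdef
  have hη : MemH p η := by
    constructor
    · intro j
      have h1 := hξ.1 j
      have h2 := hv.1 j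
      simp only [hηdef, mul_sub, h1, h2]
    · have hexp : (fun j => star (η j) * η j)
          = fun j => (star (ξ j) * ξ j - star (ξ j) * v j)
            - (star (v j) * ξ j - star (v j) * v j) := by
        funext j
        simp only [hηdef, star_sub]
        ring
      rw [hexp]
      exact ((hξ.2.sub (summable_inner' hv.2 hξ.2)).sub
        ((summable_inner' hξ.2 hv.2).sub hv.2))
  have hz : ∀ j, η j t = 0 := by
    intro j
    have h1 : p j t * ξ j t = ξ j t := by
      have := hξ.1 j
      have := congrArg (fun f : C(T, ℂ) => f t) this
      simpa using this
    simp only [hηdef, hvdef, ContinuousMap.sub_apply, ContinuousMap.smul_apply, smul_eq_mul]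
    rcases hp j t with h | h
    · rw [h] at h1 ⊢
      rw [mul_zero, sub_zero, ← h1, zero_mul]
    · rw [h]
      ring
  have hsum : ξ = v + η := by
    funext j
    simp [hηdef]
  have hadd : u.toFun ξ = u.toFun v + u.toFun η := by
    rw [hsum]; exact u.map_add' v η hv hη
  have hzero : u.toFun η i t = 0 := adjointable_eval_zero p u t η hη hz i
  have : u.toFun ξ i t = u.toFun v i t + u.toFun η i t := by
    rw [hadd]; simp
  rw [this, hzero, add_zero]
end

section
/- For every t ∈ T, the map φ_t : L_E(H) → B(ℓ²(I)) is a *-homomorphism: it is linear and satisfies φ_t(u∘v) = φ_t(u)∘φ_t(v) and φ_t(u*) = (φ_t(u))* for all u,v ∈ L_E(H). -/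
open scoped ComplexOrder

/-! An adjointable `u` satisfies `u ξ i = ⟨u ξ, eᵢ⟩ = ⟨ξ, u* eᵢ⟩` for `eᵢ = Pi.single i (p i)`, so
`(u ξ)(t) = ∑ⱼ conj ((u* eᵢ) j t) * ξ j t` depends only on `ξ(t)`. As `ψ (ψ_t ξ)` and `ξ` agree
at `t`, `φ_t` is multiplicative. Because each `p i t` is `0` or `1`,
`⟨ζ, φ_t(u) η⟩ = ⟨u (ψ η), ψ ζ⟩(t)`, and the adjoint relation follows from `⟨u ξ, η⟩ = ⟨ξ, u* η⟩`. -/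

section

open ComplexConjugate

variable {T I : Type*} [TopologicalSpace T] {p : I → C(T, ℂ)}

lemma isStarProjection_of_forall_eq_zero_or_eq_one {f : C(T, ℂ)}
    (hf : ∀ t, f t = 0 ∨ f t = 1) : IsStarProjection f := by
  constructor <;> ext t <;> rcases hf t with h | h <;> simp [h]

lemma ContinuousMap.star_mul_self_apply (f : C(T, ℂ)) (t : T) :
    (star f * f) t = ((‖f t‖ ^ 2 : ℝ) : ℂ) := by
  simp [RCLike.conj_mul]

lemma summable_norm_sq_apply {ξ : I → C(T, ℂ)} (hξ : Summable fun i => star (ξ i) * ξ i)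
    (t : T) : Summable fun i => ‖ξ i t‖ ^ 2 := by
  refine Complex.summable_ofReal.1 ?_
  simpa only [ContinuousMap.star_mul_self_apply] using ContinuousMap.summable_apply hξ t

lemma MemH.apply_eq_mul {ξ : I → C(T, ℂ)} (hξ : MemH p ξ) (i : I) (t : T) :
    ξ i t = p i t * ξ i t :=
  (congrArg (· t) (hξ.1 i)).symm

lemma MemH.apply_smul_apply {ξ : I → C(T, ℂ)} (hξ : MemH p ξ) (j : I) (t : T) :
    (ξ j t • p j) t = ξ j t := by
  rw [ContinuousMap.smul_apply, smul_eq_mul, mul_comm, ← hξ.apply_eq_mul]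

variable (p) in
noncomputable def psi (ζ : ell2 I) : I → C(T, ℂ) := fun j => (ζ : I → ℂ) j • p j

namespace Represents

variable {t : T} {f g : (I → C(T, ℂ)) → (I → C(T, ℂ))} {a b : ell2 I →L[ℂ] ell2 I}

lemma apply (ha : Represents p t f a) (ζ : ell2 I) (i : I) :
    (a ζ : I → ℂ) i = f (psi p ζ) i t :=
  ha ζ i

lemma unique {a' : ell2 I →L[ℂ] ell2 I} (ha : Represents p t f a)
    (ha' : Represents p t f a') : a = a' :=
  ContinuousLinearMap.ext fun ζ => lp.ext <| funext fun i => (ha ζ i).trans (ha' ζ i).symm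

lemma linearCombination (ha : Represents p t f a) (hb : Represents p t g b) (α β : ℂ) :
    Represents p t (fun ξ => α • f ξ + β • g ξ) (α • a + β • b) := by
  intro ζ i
  change α * (a ζ : I → ℂ) i + β * (b ζ : I → ℂ) i = α * f (psi p ζ) i t + β * g (psi p ζ) i t
  rw [ha.apply, hb.apply]

end Represents

section Projections

variable (hp : ∀ i, IsStarProjection (p i))
include hp

lemma MemH.conj_mul_apply {ξ : I → C(T, ℂ)} (hξ : MemH p ξ) (i : I) (t : T) : conj (p i t) * ξ i t = ξ i t := by
  have h : conj (p i t) = p i t := congrArg (· t) (hp i).isSelfAdjoint.star_eq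
  rw [h, ← hξ.apply_eq_mul]

lemma memH_single [DecidableEq I] (i : I) : MemH p (Pi.single i (p i)) := by
  refine ⟨fun j => ?_, summable_of_ne_finset_zero (s := {i}) fun j hj => ?_⟩
  · rcases eq_or_ne j i with rfl | h
    · simp [(hp j).isIdempotentElem.eq]
    · simp [h]
  · simp [Finset.mem_singleton.not.1 hj]

lemma hinner_single [DecidableEq I] {ξ : I → C(T, ℂ)} (hξ : MemH p ξ) (i : I) :
    hinner ξ (Pi.single i (p i)) = ξ i := by
  rw [hinner, tsum_eq_single i fun j hj => by simp [hj], Pi.single_eq_same,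
    (hp i).isSelfAdjoint.star_eq, hξ.1 i]

end Projections

section Compact

variable [CompactSpace T]

lemma sum_norm_sq_apply_le_norm (ξ : I → C(T, ℂ)) (F : Finset I) (t : T) :
    ∑ i ∈ F, ‖ξ i t‖ ^ 2 ≤ ‖∑ i ∈ F, star (ξ i) * ξ i‖ := by
  have h : (∑ i ∈ F, star (ξ i) * ξ i) t = ((∑ i ∈ F, ‖ξ i t‖ ^ 2 : ℝ) : ℂ) := by
    simp only [ContinuousMap.sum_apply, ContinuousMap.star_mul_self_apply, Complex.ofReal_sum]
  have := ContinuousMap.norm_coe_le_norm (∑ i ∈ F, star (ξ i) * ξ i) t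
  rwa [h, Complex.norm_of_nonneg (by positivity)] at this

lemma norm_sum_star_mul_le (ξ η : I → C(T, ℂ)) (F : Finset I) :
    ‖∑ i ∈ F, star (η i) * ξ i‖ ≤
      (‖∑ i ∈ F, star (ξ i) * ξ i‖ + ‖∑ i ∈ F, star (η i) * η i‖) / 2 := by
  refine (ContinuousMap.norm_le _ (by positivity)).2 fun t => ?_
  calc ‖(∑ i ∈ F, star (η i) * ξ i) t‖ ≤ ∑ i ∈ F, ‖η i t‖ * ‖ξ i t‖ := by
        simpa [ContinuousMap.sum_apply] using norm_sum_le F fun i => conj (η i t) * ξ i t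
    _ ≤ ∑ i ∈ F, (‖ξ i t‖ ^ 2 + ‖η i t‖ ^ 2) / 2 := by
        gcongr with i
        linarith [two_mul_le_add_sq ‖ξ i t‖ ‖η i t‖]
    _ ≤ _ := by
        rw [← Finset.sum_div, Finset.sum_add_distrib]
        gcongr <;> exact sum_norm_sq_apply_le_norm _ F t

lemma summable_star_mul {ξ η : I → C(T, ℂ)} (hξ : Summable fun i => star (ξ i) * ξ i)
    (hη : Summable fun i => star (η i) * η i) : Summable fun i => star (η i) * ξ i := by
  classical
  rw [summable_iff_vanishing_norm] at *
  intro ε hε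
  obtain ⟨s, hs⟩ := hξ ε hε
  obtain ⟨s', hs'⟩ := hη ε hε
  refine ⟨s ∪ s', fun F hF => ?_⟩
  rw [Finset.disjoint_union_right] at hF
  linarith [norm_sum_star_mul_le ξ η F, hs F hF.1, hs' F hF.2]

lemma star_hinner (ξ η : I → C(T, ℂ)) : star (hinner ξ η) = hinner η ξ := by
  simp only [hinner, tsum_star, star_mul, star_star]

lemma hinner_apply {ξ η : I → C(T, ℂ)} (hξ : Summable fun i => star (ξ i) * ξ i)
    (hη : Summable fun i => star (η i) * η i) (t : T) :
    hinner ξ η t = ∑' i, conj (η i t) * ξ i t := by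
  rw [hinner, ← ContinuousMap.tsum_apply (summable_star_mul hξ hη)]
  rfl

variable (hp : ∀ i, IsStarProjection (p i))
include hp

lemma memH_smul_of_summable_norm_sq {c : I → ℂ} (hc : Summable fun i => ‖c i‖ ^ 2) :
    MemH p fun i => c i • p i := by
  refine ⟨fun i => by rw [mul_smul_comm, (hp i).isIdempotentElem.eq], ?_⟩
  refine hc.of_norm_bounded fun i => ?_
  have hci : ‖c i • p i‖ ≤ ‖c i‖ := by
    rw [norm_smul]
    exact mul_le_of_le_one_right (norm_nonneg _) (hp i).norm_le
  calc ‖star (c i • p i) * (c i • p i)‖ ≤ ‖c i • p i‖ * ‖c i • p i‖ := by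
        simpa only [norm_star] using norm_mul_le (star (c i • p i)) (c i • p i)
    _ ≤ ‖c i‖ ^ 2 := by rw [sq]; gcongr

lemma memH_psi (ζ : ell2 I) : MemH p (psi p ζ) := by
  refine memH_smul_of_summable_norm_sq hp ?_
  simpa using (lp.memℓp ζ).summable (by norm_num : 0 < (2 : ENNReal).toReal)

lemma MemH.memH_apply_smul {ξ : I → C(T, ℂ)} (hξ : MemH p ξ) (t : T) :
    MemH p fun j => ξ j t • p j :=
  memH_smul_of_summable_norm_sq hp (summable_norm_sq_apply hξ.2 t)

namespace Adjointable

lemma apply_eq_tsum [DecidableEq I] (u : Adjointable p) {ξ : I → C(T, ℂ)} (hξ : MemH p ξ)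
    (i : I) (t : T) : u.toFun ξ i t = ∑' j, conj (u.adj (Pi.single i (p i)) j t) * ξ j t := by
  have he := memH_single hp i
  rw [← hinner_single hp (u.mem' ξ hξ), u.inner_adj' ξ _ hξ he,
    hinner_apply hξ.2 (u.adj_mem' _ he).2]

lemma apply_congr (u : Adjointable p) {ξ ξ' : I → C(T, ℂ)} (hξ : MemH p ξ) (hξ' : MemH p ξ')
    {t : T} (h : ∀ j, ξ j t = ξ' j t) (i : I) : u.toFun ξ i t = u.toFun ξ' i t := by
  classical
  simp only [u.apply_eq_tsum hp hξ, u.apply_eq_tsum hp hξ', h]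

end Adjointable

namespace Represents

variable {t : T} {a b : ell2 I →L[ℂ] ell2 I}

lemma comp {u v : Adjointable p} (ha : Represents p t u.toFun a)
    (hb : Represents p t v.toFun b) : Represents p t (u.toFun ∘ v.toFun) (a ∘L b) := by
  intro ζ i
  have hw := v.mem' _ (memH_psi hp ζ)
  have hbζ : psi p (b ζ) = fun j => v.toFun (psi p ζ) j t • p j := by
    funext j; rw [psi, hb.apply]
  rw [ContinuousLinearMap.comp_apply, ha.apply, hbζ]
  exact u.apply_congr hp (hw.memH_apply_smul hp t) hw (fun j => hw.apply_smul_apply j t) i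

lemma inner_eq {f : (I → C(T, ℂ)) → (I → C(T, ℂ))} (ha : Represents p t f a) (ζ η : ell2 I)
    (hf : MemH p (f (psi p η))) :
    inner ℂ ζ (a η) = hinner (f (psi p η)) (psi p ζ) t := by
  rw [lp.inner_eq_tsum, hinner_apply hf.2 (memH_psi hp ζ).2]
  refine tsum_congr fun j => ?_
  rw [ha.apply, RCLike.inner_apply, psi, ContinuousMap.smul_apply, smul_eq_mul, map_mul,
    mul_assoc, hf.conj_mul_apply hp, mul_comm]

lemma eq_adjoint {u : Adjointable p} (ha : Represents p t u.toFun a)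
    (hb : Represents p t u.adj b) : b = ContinuousLinearMap.adjoint a := by
  refine (ContinuousLinearMap.eq_adjoint_iff b a).2 fun ζ η => ?_
  rw [← inner_conj_symm, hb.inner_eq hp η ζ (u.adj_mem' _ (memH_psi hp ζ)),
    ha.inner_eq hp ζ η (u.mem' _ (memH_psi hp η)),
    u.inner_adj' _ _ (memH_psi hp η) (memH_psi hp ζ), ← star_hinner (psi p η)]
  simp

end Represents

end Compact

end

theorem stmt2_general {T I : Type*} [TopologicalSpace T] [CompactSpace T]
    (p : I → C(T, ℂ)) (hp : ∀ i t, p i t = 0 ∨ p i t = 1)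
    (t : T) (u v : Adjointable p)
    (a b c d e : ell2 I →L[ℂ] ell2 I) (α β : ℂ)
    (ha : Represents p t u.toFun a)
    (hb : Represents p t v.toFun b)
    (hc : Represents p t (u.toFun ∘ v.toFun) c)
    (hd : Represents p t u.adj d)
    (he : Represents p t (fun ξ => α • u.toFun ξ + β • v.toFun ξ) e) :
    c = a ∘L b ∧ d = ContinuousLinearMap.adjoint a ∧ e = α • a + β • b := by
  have hproj i := isStarProjection_of_forall_eq_zero_or_eq_one (hp i)
  exact ⟨hc.unique (ha.comp hproj hb), ha.eq_adjoint hproj hd,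
    he.unique (ha.linearCombination hb α β)⟩

/-- For every `t ∈ T`, the map `φ_t : L_E(H) → B(ℓ²(I))` is a
*-homomorphism: it is linear, multiplicative, and preserves adjoints. -/
theorem stmt2 {T I : Type*} [TopologicalSpace T] [CompactSpace T] [T2Space T]
    (p : I → C(T, ℂ)) (hp : ∀ i t, p i t = 0 ∨ p i t = 1)
    (t : T) (u v : Adjointable p)
    (a b c d e : ell2 I →L[ℂ] ell2 I) (α β : ℂ)
    (ha : Represents p t u.toFun a)
    (hb : Represents p t v.toFun b)
    (hc : Represents p t (u.toFun ∘ v.toFun) c)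
    (hd : Represents p t u.adj d)
    (he : Represents p t (fun ξ => α • u.toFun ξ + β • v.toFun ξ) e) :
    c = a ∘L b ∧ d = ContinuousLinearMap.adjoint a ∧ e = α • a + β • b :=
  stmt2_general p hp t u v a b c d e α β ha hb hc hd he
end

section
/- Let T be a compact Hausdorff extremally disconnected space and u : T → K(ℓ²(I)) a map continuous for the operator norm. Then for every integer n ≥ 1, the set U_n(u) := {t ∈ T : θ_n(u(t)) ≠ 0} is the union of a countable family of pairwise disjoint clopen subsets of T. -/
noncomputable section

/-!
The singular value `θ_n` is the distance to a fixed set of operators, so `t ↦ θ_n (u t)` is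
continuous and `U_n(u)` is the union of the open sets `{t | 1/(k+1) < θ_n (u t)}`, each of
whose closures stays inside `U_n(u)`. In an extremally disconnected space these closures are
clopen, and disjointing them keeps them clopen.
-/

lemma IsClopen.disjointed {X : Type*} [TopologicalSpace X] {s : ℕ → Set X}
    (hs : ∀ k, IsClopen (s k)) (k : ℕ) : IsClopen (disjointed s k) :=
  disjointedRec (fun _ i ht => ht.diff (hs i)) (hs k)

theorem ExtremallyDisconnected.exists_clopen_partition_iUnion_closure {X : Type*}
    [TopologicalSpace X] [ExtremallyDisconnected X] {U : ℕ → Set X} (hU : ∀ k, IsOpen (U k)) :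
    ∃ V : ℕ → Set X, (∀ k, IsClopen (V k)) ∧ Pairwise (Function.onFun Disjoint V) ∧
      ⋃ k, closure (U k) = ⋃ k, V k :=
  ⟨disjointed fun k => closure (U k),
    IsClopen.disjointed fun k => ⟨isClosed_closure, open_closure _ (hU k)⟩,
    disjoint_disjointed _, iUnion_disjointed.symm⟩

theorem iUnion_closure_one_div_lt_norm_eq_ne_zero {X E : Type*} [TopologicalSpace X]
    [NormedAddCommGroup E] {f : X → E} (hf : Continuous f) :
    ⋃ k : ℕ, closure {x | 1 / ((k : ℝ) + 1) < ‖f x‖} = {x | f x ≠ 0} := by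
  apply Set.Subset.antisymm
  · refine Set.iUnion_subset fun k => ?_
    have hclosed : IsClosed {x | 1 / ((k : ℝ) + 1) ≤ ‖f x‖} :=
      isClosed_le continuous_const hf.norm
    have hsub : {x | 1 / ((k : ℝ) + 1) < ‖f x‖} ⊆ {x | 1 / ((k : ℝ) + 1) ≤ ‖f x‖} :=
      Set.ofPred_subset_ofPred.mpr fun _ => le_of_lt
    refine (closure_minimal hsub hclosed).trans fun x hx => ?_
    exact norm_pos_iff.mp ((Nat.one_div_pos_of_nat).trans_le hx)
  · intro x hx
    obtain ⟨k, hk⟩ := exists_nat_one_div_lt (norm_pos_iff.mpr hx)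
    exact Set.mem_iUnion.mpr ⟨k, subset_closure hk⟩

theorem ExtremallyDisconnected.exists_clopen_partition_ne_zero {X E : Type*}
    [TopologicalSpace X] [ExtremallyDisconnected X] [NormedAddCommGroup E] {f : X → E}
    (hf : Continuous f) :
    ∃ V : ℕ → Set X, (∀ k, IsClopen (V k)) ∧ Pairwise (Function.onFun Disjoint V) ∧
      {x | f x ≠ 0} = ⋃ k, V k := by
  rw [← iUnion_closure_one_div_lt_norm_eq_ne_zero hf]
  exact exists_clopen_partition_iUnion_closure fun k => isOpen_lt continuous_const hf.norm

lemma sval_eq_infDist {F : Type*} [NormedAddCommGroup F] [InnerProductSpace ℂ F] (n : ℕ)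
    (a : F →L[ℂ] F) :
    sval n a = Metric.infDist a
      {b : F →L[ℂ] F | Module.rank ℂ (LinearMap.range (b : F →ₗ[ℂ] F)) < n} := by
  rw [Metric.infDist_eq_iInf, sval, ← sInf_image']
  congr 1
  ext r
  simp [dist_eq_norm, eq_comm]

theorem continuous_sval {F : Type*} [NormedAddCommGroup F] [InnerProductSpace ℂ F] (n : ℕ) :
    Continuous (sval n : (F →L[ℂ] F) → ℝ) := by
  simpa only [funext (sval_eq_infDist (F := F) n)] using Metric.continuous_infDist_pt _

theorem stmt8_general {T I : Type*} [TopologicalSpace T]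
    [ExtremallyDisconnected T]
    (u : T → (ell2 I →L[ℂ] ell2 I))
    (hcont : Continuous u)
    (n : ℕ) :
    ∃ V : ℕ → Set T, (∀ k, IsClopen (V k)) ∧
      Pairwise (Function.onFun Disjoint V) ∧
      {t : T | sval n (u t) ≠ 0} = ⋃ k, V k :=
  ExtremallyDisconnected.exists_clopen_partition_ne_zero ((continuous_sval n).comp hcont)

/-- If `T` is a compact Hausdorff extremally disconnected space and
`u : T → K(ℓ²(I))` is norm continuous, then for every `n ≥ 1` the set
`U_n(u) = {t | θ_n (u t) ≠ 0}` is the union of a countable family of pairwise disjoint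
clopen subsets of `T`. -/
theorem stmt8 {T I : Type*} [TopologicalSpace T] [CompactSpace T] [T2Space T]
    [ExtremallyDisconnected T]
    (u : T → (ell2 I →L[ℂ] ell2 I))
    (hcpt : ∀ t, IsCompactOperator (⇑(u t)))
    (hcont : Continuous u)
    (n : ℕ) (hn : 1 ≤ n) :
    ∃ V : ℕ → Set T, (∀ k, IsClopen (V k)) ∧
      Pairwise (Function.onFun Disjoint V) ∧
      {t : T | sval n (u t) ≠ 0} = ⋃ k, V k :=
  stmt8_general u hcont n

end
end

section
/- Let T be a compact Hausdorff space, F a Hilbert space, and η : T → F a map (not assumed continuous) such that the map T → K(F), t ↦ η(t)⟨·,η(t)⟩, is continuous for the operator norm. Let t₀ ∈ T with η(t₀) ≠ 0, put U := {t ∈ T : ⟨η(t₀), η(t)⟩ ≠ 0}, and define ξ : U → F by ξ(t) := (⟨η(t₀),η(t)⟩ / |⟨η(t₀),η(t)⟩|)·η(t). Then U is an open neighbourhood of t₀, ξ is continuous on U, ξ(t₀) = η(t₀), and ξ(t)⟨·,ξ(t)⟩ = η(t)⟨·,η(t)⟩ for all t ∈ U. -/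
noncomputable section

/-
Applying `η(t)⟨·,η(t)⟩` to `η(t₀)` shows that `t ↦ ⟨η(t), η(t₀)⟩ η(t)` is continuous, and pairing
this with `η(t₀)` shows that `t ↦ |⟨η(t), η(t₀)⟩|²` is continuous. Hence `U` is open and
`ξ(t) = |⟨η(t), η(t₀)⟩|⁻¹ ⟨η(t), η(t₀)⟩ η(t)` is continuous on `U`. Multiplying a vector by a
unimodular scalar does not change the rank one operator it defines.
-/

section RankOne

variable {𝕜 E : Type*} [RCLike 𝕜] [NormedAddCommGroup E] [InnerProductSpace 𝕜 E]

theorem RCLike.norm_div_ofReal_norm_self {z : 𝕜} (hz : z ≠ 0) : ‖z / (‖z‖ : 𝕜)‖ = 1 := by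
  rw [norm_div, RCLike.norm_ofReal, abs_norm, div_self (norm_ne_zero_iff.mpr hz)]

theorem InnerProductSpace.rankOne_smul_self_of_norm_eq_one {a : 𝕜} (ha : ‖a‖ = 1) (x : E) :
    InnerProductSpace.rankOne 𝕜 (a • x) (a • x) = InnerProductSpace.rankOne 𝕜 x x := by
  ext y
  simp only [InnerProductSpace.rankOne_apply, inner_smul_left, smul_smul]
  rw [mul_right_comm, RCLike.conj_mul, ha, RCLike.ofReal_one, one_pow, one_mul]

theorem norm_inner_inner_smul_self (x v : E) :
    ‖inner 𝕜 v (inner 𝕜 x v • x)‖ = ‖inner 𝕜 x v‖ ^ 2 := by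
  rw [inner_smul_right, norm_mul, norm_inner_symm, sq]

variable {T : Type*} [TopologicalSpace T] {η : T → E}
  (hη : Continuous fun t => InnerProductSpace.rankOne 𝕜 (η t) (η t))
include hη

theorem continuous_inner_smul_of_continuous_rankOne (v : E) :
    Continuous fun t => inner 𝕜 (η t) v • η t :=
  hη.clm_apply continuous_const

theorem continuous_norm_inner_of_continuous_rankOne (v : E) :
    Continuous fun t => ‖inner 𝕜 (η t) v‖ := by
  have hsq : Continuous fun t => ‖inner 𝕜 (η t) v‖ ^ 2 := by
    simpa only [norm_inner_inner_smul_self] using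
      ((continuous_const (y := v)).inner (𝕜 := 𝕜)
        (continuous_inner_smul_of_continuous_rankOne hη v)).norm
  simpa only [Real.sqrt_sq (norm_nonneg _)] using hsq.sqrt

theorem isOpen_setOf_inner_ne_zero_of_continuous_rankOne (v : E) :
    IsOpen {t | inner 𝕜 (η t) v ≠ 0} := by
  simpa only [ne_eq, norm_eq_zero] using
    isOpen_ne_fun (continuous_norm_inner_of_continuous_rankOne hη v) (continuous_const (y := 0))

theorem continuousOn_phase_smul_of_continuous_rankOne (v : E) :
    ContinuousOn (fun t => (inner 𝕜 (η t) v / (‖inner 𝕜 (η t) v‖ : 𝕜)) • η t)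
      {t | inner 𝕜 (η t) v ≠ 0} := by
  have hnorm : ContinuousOn (fun t => ((‖inner 𝕜 (η t) v‖ : 𝕜))⁻¹) {t | inner 𝕜 (η t) v ≠ 0} :=
    (RCLike.continuous_ofReal.comp (continuous_norm_inner_of_continuous_rankOne hη v)).continuousOn
      |>.inv₀ fun t ht => by simpa using ht
  refine (hnorm.smul (continuous_inner_smul_of_continuous_rankOne hη v).continuousOn).congr
    fun t _ => ?_
  simp only [Pi.smul_apply', smul_smul, div_eq_inv_mul]

end RankOne

theorem rankOne_eq_innerProductSpace_rankOne {F : Type*} [NormedAddCommGroup F]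
    [InnerProductSpace ℂ F] (x y : F) : rankOne x y = InnerProductSpace.rankOne ℂ x y :=
  rfl

theorem stmt10_general {T F : Type*} [TopologicalSpace T]
    [NormedAddCommGroup F] [InnerProductSpace ℂ F]
    (η : T → F)
    (hcont : Continuous fun t => rankOne (η t) (η t))
    (t₀ : T) (h₀ : η t₀ ≠ 0) :
    IsOpen {t : T | (inner ℂ (η t) (η t₀) : ℂ) ≠ 0} ∧
    t₀ ∈ {t : T | (inner ℂ (η t) (η t₀) : ℂ) ≠ 0} ∧
    ContinuousOn (fun t => ((inner ℂ (η t) (η t₀) : ℂ) / (‖(inner ℂ (η t) (η t₀) : ℂ)‖ : ℂ)) • η t)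
      {t : T | (inner ℂ (η t) (η t₀) : ℂ) ≠ 0} ∧
    ((inner ℂ (η t₀) (η t₀) : ℂ) / (‖(inner ℂ (η t₀) (η t₀) : ℂ)‖ : ℂ)) • η t₀ = η t₀ ∧
    ∀ t ∈ {t : T | (inner ℂ (η t) (η t₀) : ℂ) ≠ 0},
      rankOne (((inner ℂ (η t) (η t₀) : ℂ) / (‖(inner ℂ (η t) (η t₀) : ℂ)‖ : ℂ)) • η t)
        (((inner ℂ (η t) (η t₀) : ℂ) / (‖(inner ℂ (η t) (η t₀) : ℂ)‖ : ℂ)) • η t)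
      = rankOne (η t) (η t) := by
  simp only [rankOne_eq_innerProductSpace_rankOne] at hcont ⊢
  have hself : inner ℂ (η t₀) (η t₀) ≠ 0 := inner_self_ne_zero.mpr h₀
  refine ⟨isOpen_setOf_inner_ne_zero_of_continuous_rankOne hcont _, hself,
    continuousOn_phase_smul_of_continuous_rankOne hcont _, ?_, fun t ht => ?_⟩
  · have hnorm : ((‖inner ℂ (η t₀) (η t₀)‖ : ℝ) : ℂ) = inner ℂ (η t₀) (η t₀) :=
      inner_self_ofReal_norm (η t₀)
    rw [hnorm, div_self hself, one_smul]
  · exact InnerProductSpace.rankOne_smul_self_of_norm_eq_one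
      (RCLike.norm_div_ofReal_norm_self ht) _

/-- Local continuous choice of a vector implementing a continuous family
of rank one projections-like operators. -/
theorem stmt10 {T F : Type*} [TopologicalSpace T] [CompactSpace T] [T2Space T]
    [NormedAddCommGroup F] [InnerProductSpace ℂ F]
    (η : T → F)
    (hcont : Continuous fun t => rankOne (η t) (η t))
    (t₀ : T) (h₀ : η t₀ ≠ 0) :
    IsOpen {t : T | (inner ℂ (η t) (η t₀) : ℂ) ≠ 0} ∧
    t₀ ∈ {t : T | (inner ℂ (η t) (η t₀) : ℂ) ≠ 0} ∧
    ContinuousOn (fun t => ((inner ℂ (η t) (η t₀) : ℂ) / (‖(inner ℂ (η t) (η t₀) : ℂ)‖ : ℂ)) • η t)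
      {t : T | (inner ℂ (η t) (η t₀) : ℂ) ≠ 0} ∧
    ((inner ℂ (η t₀) (η t₀) : ℂ) / (‖(inner ℂ (η t₀) (η t₀) : ℂ)‖ : ℂ)) • η t₀ = η t₀ ∧
    ∀ t ∈ {t : T | (inner ℂ (η t) (η t₀) : ℂ) ≠ 0},
      rankOne (((inner ℂ (η t) (η t₀) : ℂ) / (‖(inner ℂ (η t) (η t₀) : ℂ)‖ : ℂ)) • η t)
        (((inner ℂ (η t) (η t₀) : ℂ) / (‖(inner ℂ (η t) (η t₀) : ℂ)‖ : ℂ)) • η t)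
      = rankOne (η t) (η t) :=
  stmt10_general η hcont t₀ h₀

end
end
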